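/- For every ε > 0 there exist a holomorphic function f : B_{c₀} → ℂ with sup_{x ∈ B_{c₀}} |f(x)| ≤ 1 and a sequence (x_k)_{k≥1} in B_{c₀} converging to 0 in the weak topology σ(c₀, ℓ₁) such that lim_{k→∞} |f(x_k) − f(0)| exists and is greater than 2 − ε. (Consequently the point evaluation at 0 and any weak-star accumulation point of the evaluations at the x_k lie at Gleason distance 2 in the spectrum of H^∞(B_{c₀}), i.e., in different Gleason parts while in the same fiber over 0.) -/

import Mathlib

/-!
The Cayley map `cayley z = (1 + z) / (1 - z)` sends the unit disc onto the right half-plane. For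
positive weights with `∑ cₙ = ε / 2` put `h x = ∑ cₙ cayley (xₙ)` and `f = exp (-h)`; then
`Re h ≥ 0` gives `‖f‖ ≤ 1`, and `h 0 = ε / 2`. Since `h (z eₖ) = ε / 2 + cₖ (cayley z - 1)` and
the Cayley map is onto the half-plane, there is `zₖ` in the disc with `h (zₖ eₖ) = ε / 2 + πi`,
so that `f (zₖ eₖ) = -f 0` and `‖f (zₖ eₖ) - f 0‖ = 2 exp (-ε / 2) > 2 - ε`. The points `zₖ eₖ`
tend to `0` weakly because the `zₖ` are bounded and the terms of an `ℓ¹` sequence tend to `0`.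
-/

open Filter Topology Metric
open scoped ZeroAtInfty

noncomputable section

namespace ZeroAtInftyContinuousMap

section Eval

variable {α β : Type*} [TopologicalSpace α] [NormedAddCommGroup β]

theorem norm_apply_le (f : C₀(α, β)) (a : α) : ‖f a‖ ≤ ‖f‖ :=
  norm_toBCF_eq_norm (f := f) ▸ f.toBCF.norm_coe_le_norm a

variable (𝕜 : Type*) [NontriviallyNormedField 𝕜] [NormedSpace 𝕜 β]

def evalCLM (a : α) : C₀(α, β) →L[𝕜] β :=
  LinearMap.mkContinuous
    { toFun := fun f => f a
      map_add' := fun _ _ => rfl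
      map_smul' := fun _ _ => rfl } 1
    fun f => (one_mul ‖f‖).symm ▸ f.norm_apply_le a

theorem norm_evalCLM_le (a : α) : ‖(evalCLM 𝕜 a : C₀(α, β) →L[𝕜] β)‖ ≤ 1 :=
  LinearMap.mkContinuous_norm_le _ zero_le_one _

end Eval

section Single

variable {ι β : Type*} [TopologicalSpace ι] [DiscreteTopology ι] [DecidableEq ι]
  [NormedAddCommGroup β]

def single (i : ι) (b : β) : C₀(ι, β) where
  toFun := Pi.single i b
  continuous_toFun := continuous_of_discreteTopology
  zero_at_infty' := by
    rw [cocompact_eq_cofinite]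
    exact tendsto_const_nhds.congr'
      ((eventually_cofinite_ne i).mono fun j hj => by simp [hj])

@[simp]
theorem coe_single (i : ι) (b : β) : ⇑(single i b) = Pi.single i b := rfl

theorem norm_single_le (i : ι) (b : β) : ‖single i b‖ ≤ ‖b‖ := by
  rw [← norm_toBCF_eq_norm]
  refine (BoundedContinuousFunction.norm_le (norm_nonneg b)).2 fun j => ?_
  by_cases h : j = i
  · subst h; simp
  · simp [h]

end Single

end ZeroAtInftyContinuousMap

open ZeroAtInftyContinuousMap

theorem tendsto_tsum_mul_single (a : lp (fun _ : ℕ => ℂ) 1) {z : ℕ → ℂ} {C : ℝ}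
    (hz : ∀ k, ‖z k‖ ≤ C) :
    Tendsto (fun k : ℕ => ∑' j, a j * single k (z k) j) atTop (𝓝 0) := by
  have hsingle : ∀ k, ∑' j, a j * single k (z k) j = a k * z k := fun k => by
    simp only [coe_single, Pi.single_apply, mul_ite, mul_zero]
    exact tsum_ite_eq k _
  have ha : Summable fun j => ‖a j‖ := by
    simpa using (lp.memℓp a).summable (by simp)
  simp only [hsingle]
  refine squeeze_zero_norm (fun k => ?_) (by simpa using ha.tendsto_atTop_zero.mul_const C)
  rw [norm_mul]
  exact mul_le_mul_of_nonneg_left (hz k) (norm_nonneg _)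

theorem Complex.re_tsum_nonneg {ι : Type*} {f : ι → ℂ} (hf : ∀ i, 0 ≤ (f i).re) :
    0 ≤ (∑' i, f i).re := by
  by_cases h : Summable f
  · rw [Complex.re_tsum h]
    exact tsum_nonneg hf
  · simp [tsum_eq_zero_of_not_summable h]

theorem differentiableOn_tsum_mul_comp {ι E : Type*} [NormedAddCommGroup E] [NormedSpace ℂ E]
    {φ : ℂ → ℂ} (hφ : DifferentiableOn ℂ φ (ball 0 1)) {c : ι → ℂ} (hc : Summable (‖c ·‖))
    {ℓ : ι → E →L[ℂ] ℂ} (hℓ : ∀ i, ‖ℓ i‖ ≤ 1) :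
    DifferentiableOn ℂ (fun x => ∑' i, c i * φ (ℓ i x)) (ball 0 1) := by
  intro x₀ hx₀
  obtain ⟨r, hx₀r, hr⟩ := exists_between (mem_ball_zero_iff.1 hx₀)
  obtain ⟨M, hM⟩ := (isCompact_closedBall (0 : ℂ) r).exists_bound_of_continuousOn
    ((hφ.deriv isOpen_ball).continuousOn.mono (closedBall_subset_ball hr))
  have hℓx : ∀ i, ∀ x ∈ ball (0 : E) r, ‖ℓ i x‖ ≤ r := fun i x hx =>
    calc ‖ℓ i x‖ ≤ ‖ℓ i‖ * ‖x‖ := (ℓ i).le_opNorm x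
      _ ≤ 1 * r := mul_le_mul (hℓ i) (mem_ball_zero_iff.1 hx).le (norm_nonneg _) zero_le_one
      _ = r := one_mul r
  have hderiv : ∀ i, ∀ x ∈ ball (0 : E) r,
      HasFDerivAt (fun y => c i * φ (ℓ i y)) ((c i * deriv φ (ℓ i x)) • ℓ i) x := by
    intro i x hx
    have hφx : DifferentiableAt ℂ φ (ℓ i x) :=
      hφ.differentiableAt (isOpen_ball.mem_nhds (mem_ball_zero_iff.2 ((hℓx i x hx).trans_lt hr)))
    simpa only [smul_smul, Function.comp_def] using
      (hφx.hasDerivAt.comp_hasFDerivAt x (ℓ i).hasFDerivAt).const_mul (c i)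
  have hbound : ∀ i, ∀ x ∈ ball (0 : E) r, ‖(c i * deriv φ (ℓ i x)) • ℓ i‖ ≤ ‖c i‖ * M := by
    intro i x hx
    rw [norm_smul, norm_mul, mul_assoc]
    refine mul_le_mul_of_nonneg_left ?_ (norm_nonneg _)
    exact (mul_le_of_le_one_right (norm_nonneg _) (hℓ i)).trans
      (hM _ (mem_closedBall_zero_iff.2 (hℓx i x hx)))
  have hsum₀ : Summable fun i => c i * φ (ℓ i 0) := by
    simpa using hc.of_norm.mul_right (φ 0)
  exact (hasFDerivAt_tsum_of_isPreconnected (hc.mul_right M) isOpen_ball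
    (convex_ball _ _).isPreconnected hderiv hbound (mem_ball_self (hx₀r.trans_le' (norm_nonneg _)))
    hsum₀ (mem_ball_zero_iff.2 hx₀r)).differentiableAt.differentiableWithinAt

def cayley (z : ℂ) : ℂ := (1 + z) / (1 - z)

@[simp]
theorem cayley_zero : cayley 0 = 1 := by simp [cayley]

theorem one_sub_ne_zero_of_norm_lt_one {z : ℂ} (hz : ‖z‖ < 1) : 1 - z ≠ 0 := by
  rw [sub_ne_zero]
  rintro rfl
  simp at hz

theorem differentiableOn_cayley : DifferentiableOn ℂ cayley (ball 0 1) :=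
  (differentiableOn_const 1 |>.add differentiableOn_id).div
    (differentiableOn_const 1 |>.sub differentiableOn_id)
    fun _ hz => one_sub_ne_zero_of_norm_lt_one (mem_ball_zero_iff.1 hz)

theorem re_cayley_nonneg {z : ℂ} (hz : ‖z‖ < 1) : 0 ≤ (cayley z).re := by
  have hz2 : z.re * z.re + z.im * z.im < 1 := by
    rw [← Complex.normSq_apply, ← Complex.sq_norm]
    nlinarith [norm_nonneg z]
  rw [cayley, Complex.div_re, ← add_div]
  refine div_nonneg ?_ (Complex.normSq_nonneg _)
  simp only [Complex.add_re, Complex.sub_re, Complex.add_im, Complex.sub_im, Complex.one_re,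
    Complex.one_im]
  nlinarith

theorem exists_cayley_eq {w : ℂ} (hw : 0 < w.re) : ∃ z, ‖z‖ < 1 ∧ cayley z = w := by
  have hlt : ‖w - 1‖ < ‖w + 1‖ := by
    rw [← sq_lt_sq₀ (norm_nonneg _) (norm_nonneg _), Complex.sq_norm, Complex.sq_norm,
      Complex.normSq_apply, Complex.normSq_apply]
    simp only [Complex.add_re, Complex.sub_re, Complex.add_im, Complex.sub_im, Complex.one_re,
      Complex.one_im]
    nlinarith
  have hne : w + 1 ≠ 0 := norm_pos_iff.1 ((norm_nonneg _).trans_lt hlt)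
  have hz : ‖(w - 1) / (w + 1)‖ < 1 := by
    rwa [norm_div, div_lt_one (norm_pos_iff.2 hne)]
  refine ⟨(w - 1) / (w + 1), hz, ?_⟩
  rw [cayley, div_eq_iff (one_sub_ne_zero_of_norm_lt_one hz)]
  field_simp
  ring

def cayleySeries (c : ℕ → ℝ) (x : C₀(ℕ, ℂ)) : ℂ := ∑' n, (c n : ℂ) * cayley (x n)

theorem differentiableOn_cayleySeries {c : ℕ → ℝ} (hc : Summable c) :
    DifferentiableOn ℂ (cayleySeries c) (ball 0 1) :=
  differentiableOn_tsum_mul_comp (ℓ := fun n => evalCLM ℂ n) differentiableOn_cayley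
    (by simpa using hc.abs) fun n => norm_evalCLM_le ℂ n

theorem re_cayleySeries_nonneg {c : ℕ → ℝ} (hc : ∀ n, 0 ≤ c n) {x : C₀(ℕ, ℂ)} (hx : ‖x‖ < 1) :
    0 ≤ (cayleySeries c x).re :=
  Complex.re_tsum_nonneg fun n => by
    rw [Complex.re_ofReal_mul]
    exact mul_nonneg (hc n) (re_cayley_nonneg ((x.norm_apply_le n).trans_lt hx))

theorem cayleySeries_zero (c : ℕ → ℝ) : cayleySeries c 0 = ∑' n, c n := by
  simp [cayleySeries, Complex.ofReal_tsum]

theorem cayleySeries_single {c : ℕ → ℝ} (hc : Summable c) (k : ℕ) (z : ℂ) :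
    cayleySeries c (single k z) = ∑' n, c n + c k * (cayley z - 1) := by
  have hterm : ∀ n, (c n : ℂ) * cayley (single k z n)
      = c n + if n = k then (c k : ℂ) * (cayley z - 1) else 0 := fun n => by
    by_cases h : n = k
    · subst h
      simp
      ring
    · simp [h]
  rw [cayleySeries, tsum_congr hterm, (Complex.summable_ofReal.2 hc).tsum_add
    ⟨_, hasSum_ite_eq k _⟩, Complex.ofReal_tsum, tsum_ite_eq]

theorem norm_exp_neg_add_pi_mul_I_sub (S : ℝ) :
    ‖Complex.exp (-(S + Real.pi * Complex.I)) - Complex.exp (-S)‖ = 2 * Real.exp (-S) := by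
  have h : Complex.exp (-(S + Real.pi * Complex.I)) - Complex.exp (-S)
      = ((-(2 * Real.exp (-S)) : ℝ) : ℂ) := by
    rw [neg_add, Complex.exp_add, Complex.exp_neg (Real.pi * Complex.I), Complex.exp_pi_mul_I]
    push_cast
    ring
  rw [h, Complex.norm_real, Real.norm_eq_abs, abs_neg, abs_of_pos (by positivity)]

theorem exists_cayleySeries_single_eq {c : ℕ → ℝ} (hc : Summable c) {k : ℕ} (hck : 0 < c k) :
    ∃ z, ‖z‖ < 1 ∧ cayleySeries c (single k z) = ∑' n, c n + Real.pi * Complex.I := by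
  obtain ⟨z, hz, hcz⟩ := exists_cayley_eq (w := 1 + Real.pi * Complex.I / c k) (by simp)
  have hck' : (c k : ℂ) ≠ 0 := Complex.ofReal_ne_zero.2 hck.ne'
  refine ⟨z, hz, ?_⟩
  rw [cayleySeries_single hc, hcz, add_sub_cancel_left, mul_div_cancel₀ _ hck']

/-- for every `ε > 0` there are a holomorphic `f : B_{c₀} → ℂ` bounded by `1`
and a sequence `(x_k)` in `B_{c₀}` converging weakly (against `ℓ₁`) to `0` such that
`|f(x_k) − f(0)|` converges to a limit greater than `2 − ε`. -/
theorem stmt14 (ε : ℝ) (hε : 0 < ε) :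
    ∃ f : C₀(ℕ, ℂ) → ℂ, DifferentiableOn ℂ f (ball 0 1) ∧
      (∀ x ∈ ball (0 : C₀(ℕ, ℂ)) 1, ‖f x‖ ≤ 1) ∧
      ∃ x : ℕ → C₀(ℕ, ℂ), (∀ k, x k ∈ ball (0 : C₀(ℕ, ℂ)) 1) ∧
        (∀ a : lp (fun _ : ℕ => ℂ) 1,
          Tendsto (fun k => ∑' j, a j * x k j) atTop (nhds 0)) ∧
        ∃ L : ℝ, Tendsto (fun k => ‖f (x k) - f 0‖) atTop (nhds L) ∧ 2 - ε < L := by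
  set c : ℕ → ℝ := fun n => ε / 4 * (1 / 2) ^ n
  have hc_pos : ∀ n, 0 < c n := fun n => by positivity
  have hc_sum : Summable c := summable_geometric_two.mul_left _
  have hc_tsum : ∑' n, c n = ε / 2 := by
    rw [tsum_mul_left, tsum_geometric_two]
    ring
  choose z hz hcz using fun k => exists_cayleySeries_single_eq hc_sum (hc_pos k)
  refine ⟨fun x => Complex.exp (-cayleySeries c x),
    (differentiableOn_cayleySeries hc_sum).neg.cexp, fun x hx => ?_, fun k => single k (z k),
    fun k => mem_ball_zero_iff.2 ((norm_single_le k (z k)).trans_lt (hz k)),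
    fun a => tendsto_tsum_mul_single a fun k => (hz k).le, 2 * Real.exp (-(ε / 2)), ?_, ?_⟩
  · rw [Complex.norm_exp, Real.exp_le_one_iff, Complex.neg_re, neg_nonpos]
    exact re_cayleySeries_nonneg (fun n => (hc_pos n).le) (mem_ball_zero_iff.1 hx)
  · simp only [hcz, cayleySeries_zero, hc_tsum, norm_exp_neg_add_pi_mul_I_sub]
    exact tendsto_const_nhds
  · linarith [Real.add_one_lt_exp (x := -(ε / 2)) (by linarith)]
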